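/- Hereditary substitution of an η-expanded variable vanishes up to weak equality: if γ ⊢ K kd simply (in shape context γ) and γ, X:|K|, δ ⊢ V : j in simple kinding, then V[X := η-expand_K(X)]_{|K|} ≈ V; the analogous statements hold for simply well-formed kinds and spines. -/

import Mathlib

set_option autoImplicit true
set_option maxHeartbeats 1000000
set_option linter.unusedVariables false

/-- Shapes (simple kinds): `k ::= ∗ | k → k`. -/
inductive SKind : Type
  | star
  | arr (j k : SKind)
/-! ## Spine-form syntax of Fω.. types and kinds (de Bruijn representation). -/

mutual
/-- Eliminations: a head applied to a spine of arguments, `E ::= F E⃗`. -/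
inductive SpTy : Type
  | elim (h : SpHead) (s : SpSpine)

/-- Heads: `F ::= X | ⊤ | ⊥ | D → E | ∀X:K.E | λX:K.E`. -/
inductive SpHead : Type
  | var (x : ℕ)
  | top
  | bot
  | arr (a b : SpTy)
  | all (k : SpKd) (a : SpTy)
  | lam (k : SpKd) (a : SpTy)

/-- Spines: finite sequences of eliminations. -/
inductive SpSpine : Type
  | nil
  | cons (a : SpTy) (s : SpSpine)

/-- Kinds in spine form: `K ::= A..B | (X:J)→K`. -/
inductive SpKd : Type
  | intv (a b : SpTy)
  | pi (j k : SpKd)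
end

/-- Shape erasure of spine-form kinds: `|A..B| = ∗`, `|(X:J)→K| = |J| → |K|`. -/
def SpKd.shape : SpKd → SKind
  | .intv _ _ => .star
  | .pi j k => .arr j.shape k.shape

/-- Spine concatenation. -/
def SpSpine.append : SpSpine → SpSpine → SpSpine
  | .nil, s' => s'
  | .cons a s, s' => .cons a (s.append s')

/-- (Non-reducing) application of an elimination to a spine. -/
def SpTy.appSp : SpTy → SpSpine → SpTy
  | .elim h s, s' => .elim h (s.append s')

/-- (Non-reducing) application of an elimination to a single argument. -/
def SpTy.app1 (e d : SpTy) : SpTy := e.appSp (.cons d .nil)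

mutual
/-- Shift: increment all variables `≥ c` by one. -/
def SpTy.shift (c : ℕ) : SpTy → SpTy
  | .elim h s => .elim (h.shift c) (s.shift c)

def SpHead.shift (c : ℕ) : SpHead → SpHead
  | .var x => if x < c then .var x else .var (x + 1)
  | .top => .top
  | .bot => .bot
  | .arr a b => .arr (a.shift c) (b.shift c)
  | .all k a => .all (k.shift c) (a.shift (c + 1))
  | .lam k a => .lam (k.shift c) (a.shift (c + 1))

def SpSpine.shift (c : ℕ) : SpSpine → SpSpine
  | .nil => .nil
  | .cons a s => .cons (a.shift c) (s.shift c)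

def SpKd.shift (c : ℕ) : SpKd → SpKd
  | .intv a b => .intv (a.shift c) (b.shift c)
  | .pi j k => .pi (j.shift c) (k.shift (c + 1))
end

/-- Weakening by `n` fresh innermost variables. -/
def SpTy.weaken (n : ℕ) (e : SpTy) : SpTy := (SpTy.shift 0)^[n] e

/-- Weakening of kinds by `n` fresh innermost variables. -/
def SpKd.weaken (n : ℕ) (k : SpKd) : SpKd := (SpKd.shift 0)^[n] k

mutual
/-- Ordinary (capture-avoiding, non-hereditary) substitution on spine form. -/
def SpTy.subst : SpTy → ℕ → SpTy → SpTy
  | .elim (.var y) s, x, v =>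
      if y = x then v.appSp (s.subst x v)
      else .elim (.var (if x < y then y - 1 else y)) (s.subst x v)
  | .elim .top s, x, v => .elim .top (s.subst x v)
  | .elim .bot s, x, v => .elim .bot (s.subst x v)
  | .elim (.arr a b) s, x, v => .elim (.arr (a.subst x v) (b.subst x v)) (s.subst x v)
  | .elim (.all k a) s, x, v =>
      .elim (.all (k.subst x v) (a.subst (x + 1) (v.shift 0))) (s.subst x v)
  | .elim (.lam k a) s, x, v =>
      .elim (.lam (k.subst x v) (a.subst (x + 1) (v.shift 0))) (s.subst x v)

def SpSpine.subst : SpSpine → ℕ → SpTy → SpSpine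
  | .nil, _, _ => .nil
  | .cons a s, x, v => .cons (a.subst x v) (s.subst x v)

def SpKd.subst : SpKd → ℕ → SpTy → SpKd
  | .intv a b, x, v => .intv (a.subst x v) (b.subst x v)
  | .pi j k, x, v => .pi (j.subst x v) (k.subst (x + 1) (v.shift 0))
end

mutual
/-- Hereditary substitution `e[x := v]_k` of the elimination `v` for variable
`x` at shape `k`, defined mutually with reducing application by recursion on
the shape `k`. -/
def SpTy.hsubst : SpTy → ℕ → SKind → SpTy → SpTy
  | .elim (.var y) s, x, k, v =>
      if y = x then SpTy.rappSp v k (s.hsubst x k v)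
      else .elim (.var (if x < y then y - 1 else y)) (s.hsubst x k v)
  | .elim .top s, x, k, v => .elim .top (s.hsubst x k v)
  | .elim .bot s, x, k, v => .elim .bot (s.hsubst x k v)
  | .elim (.arr a b) s, x, k, v =>
      .elim (.arr (a.hsubst x k v) (b.hsubst x k v)) (s.hsubst x k v)
  | .elim (.all j a) s, x, k, v =>
      .elim (.all (j.hsubst x k v) (a.hsubst (x + 1) k (v.shift 0))) (s.hsubst x k v)
  | .elim (.lam j a) s, x, k, v =>
      .elim (.lam (j.hsubst x k v) (a.hsubst (x + 1) k (v.shift 0))) (s.hsubst x k v)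
termination_by e x k v => (sizeOf k, 1, sizeOf e)

/-- Hereditary substitution in spines (pointwise). -/
def SpSpine.hsubst : SpSpine → ℕ → SKind → SpTy → SpSpine
  | .nil, _, _, _ => .nil
  | .cons a s, x, k, v => .cons (a.hsubst x k v) (s.hsubst x k v)
termination_by s x k v => (sizeOf k, 1, sizeOf s)

/-- Hereditary substitution in kinds. -/
def SpKd.hsubst : SpKd → ℕ → SKind → SpTy → SpKd
  | .intv a b, x, k, v => .intv (a.hsubst x k v) (b.hsubst x k v)
  | .pi j k', x, k, v => .pi (j.hsubst x k v) (k'.hsubst (x + 1) k (v.shift 0))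
termination_by K x k v => (sizeOf k, 1, sizeOf K)

/-- Reducing application `d ·_k v` to a single argument:  β-contracts when `d`
is an operator abstraction and `k` is an arrow shape. -/
def SpTy.rapp : SpTy → SKind → SpTy → SpTy
  | d, .star, v => d.app1 v
  | .elim (.lam _ d') .nil, .arr k1 _, v => d'.hsubst 0 k1 v
  | .elim (.var y) s, .arr _ _, v => SpTy.app1 (.elim (.var y) s) v
  | .elim .top s, .arr _ _, v => SpTy.app1 (.elim .top s) v
  | .elim .bot s, .arr _ _, v => SpTy.app1 (.elim .bot s) v
  | .elim (.arr a b) s, .arr _ _, v => SpTy.app1 (.elim (.arr a b) s) v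
  | .elim (.all j a) s, .arr _ _, v => SpTy.app1 (.elim (.all j a) s) v
  | .elim (.lam j a) (.cons b s), .arr _ _, v => SpTy.app1 (.elim (.lam j a) (.cons b s)) v
termination_by d k v => (sizeOf k, 0, 0)

/-- Reducing application `d ·_k s⃗` to a spine, unwinding `s⃗` along `k`. -/
def SpTy.rappSp : SpTy → SKind → SpSpine → SpTy
  | d, _, .nil => d
  | d, .arr k1 k2, .cons e es => SpTy.rappSp (d.rapp (.arr k1 k2) e) k2 es
  | d, .star, .cons e es => d.appSp (.cons e es)
termination_by d k s => (sizeOf k, 0, sizeOf s + 1)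
end
/-! ## Simple kinding of β-normal η-long types in shape contexts.
A shape context assigns shapes to type-variable bindings (`some k`) and
marks term-variable bindings with `none`. -/

abbrev SCtx := List (Option SKind)

mutual
/-- Simply well-formed normal kinds: `γ ⊢ K kd`. -/
inductive SWfKd : SCtx → SpKd → Prop
  | intv : SKTy γ U .star → SKTy γ V .star → SWfKd γ (.intv U V)
  | pi : SWfKd γ J → SWfKd (some J.shape :: γ) K → SWfKd γ (.pi J K)

/-- Simple kinding of neutral types: `γ ⊢ne N : k` (a variable head applied
to a simply kinded spine). -/
inductive SKNe : SCtx → SpTy → SKind → Prop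
  | varApp : γ[x]? = some (some j) → SSp γ j s k → SKNe γ (.elim (.var x) s) k

/-- Simple spine kinding: `γ ⊢ j : V⃗ : k` — applying an operator of shape `j`
to the spine `V⃗` yields a type of shape `k`. -/
inductive SSp : SCtx → SKind → SpSpine → SKind → Prop
  | nil : SSp γ k .nil k
  | cons : SKTy γ U j → SSp γ k s l → SSp γ (.arr j k) (.cons U s) l

/-- Simple kinding of normal types: `γ ⊢ V : k`. -/
inductive SKTy : SCtx → SpTy → SKind → Prop
  | top : SKTy γ (.elim .top .nil) .star
  | bot : SKTy γ (.elim .bot .nil) .star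
  | arr : SKTy γ U .star → SKTy γ V .star → SKTy γ (.elim (.arr U V) .nil) .star
  | all : SWfKd γ K → SKTy (some K.shape :: γ) V .star →
      SKTy γ (.elim (.all K V) .nil) .star
  | lam : SWfKd γ J → SKTy (some J.shape :: γ) V k →
      SKTy γ (.elim (.lam J V) .nil) (.arr J.shape k)
  | ne : SKNe γ N .star → SKTy γ N .star
end
/-! ## Weak equality `≈` on spine-form types and kinds: the congruence that
identifies operator abstractions up to the *shape* of their domain
annotations:  `λX:J.A ≈ λX:K.B` whenever `|J| ≡ |K|` and `A ≈ B`. -/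

mutual
inductive WEqTy : SpTy → SpTy → Prop
  | elim : WEqHead h₁ h₂ → WEqSp s₁ s₂ → WEqTy (.elim h₁ s₁) (.elim h₂ s₂)

inductive WEqHead : SpHead → SpHead → Prop
  | var : WEqHead (.var x) (.var x)
  | top : WEqHead .top .top
  | bot : WEqHead .bot .bot
  | arr : WEqTy a₁ a₂ → WEqTy b₁ b₂ → WEqHead (.arr a₁ b₁) (.arr a₂ b₂)
  | all : WEqKd k₁ k₂ → WEqTy a₁ a₂ → WEqHead (.all k₁ a₁) (.all k₂ a₂)
  | lam : k₁.shape = k₂.shape → WEqTy a₁ a₂ → WEqHead (.lam k₁ a₁) (.lam k₂ a₂)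

inductive WEqSp : SpSpine → SpSpine → Prop
  | nil : WEqSp .nil .nil
  | cons : WEqTy a₁ a₂ → WEqSp s₁ s₂ → WEqSp (.cons a₁ s₁) (.cons a₂ s₂)

inductive WEqKd : SpKd → SpKd → Prop
  | intv : WEqTy a₁ a₂ → WEqTy b₁ b₂ → WEqKd (.intv a₁ b₁) (.intv a₂ b₂)
  | pi : WEqKd j₁ j₂ → WEqKd k₁ k₂ → WEqKd (.pi j₁ k₁) (.pi j₂ k₂)
end
/-- η-expansion of a type along a kind: `η_{A..B}(D) = D` and
`η_{(X:J)→K}(D) = λX:J. η_K (D (η_J X))` for `X` fresh (in de Bruijn form the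
subject is shifted under the new binder). -/
def etaExp : SpKd → SpTy → SpTy
  | .intv _ _, a => a
  | .pi J K, a =>
      .elim (.lam J (etaExp K ((a.shift 0).app1 (etaExp J (.elim (.var 0) .nil))))) .nil

/-!
By induction on the shape `k = |K|`, two facts are proved together:
(i) `V[X := η_K(X)]_k ≈ V` for simply kinded `V` (and likewise for kinds and spines), and
(ii) `η_K(X) ·_k s ≈ X s` for every simply kinded spine `s` taking shape `k` to `∗`.
Since `≈` ignores domain annotations, both depend on `K` only through its shape.
(i) at `k` is a structural induction on the kinding derivation whose only non-trivial case, a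
neutral `X s`, is (ii) at `k`. For (ii) with `K = (Y:J)→K'`, the first β-step substitutes the
first argument `e` into `η_J(Y)`, and unfolding `η_J` once more shows that this gives back `e`
when `e` is η-long of shape `|J|`: writing `J = (Z:J₁)→J₂` and `e = λZ. b`, the residual
substitution of `η_{J₁}(Z)` for `Z` in `b` is (i) at the strictly smaller shape `|J₁|`.
-/

theorem SpHead.shift_var (c y : ℕ) :
    SpHead.shift c (.var y) = .var (if y < c then y else y + 1) := by
  by_cases h : y < c <;> simp [SpHead.shift, h]

namespace SpKd

theorem shape_shift : ∀ (K : SpKd) (c : ℕ), (K.shift c).shape = K.shape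
  | .intv _ _, _ => rfl
  | .pi j k, c => by simp [SpKd.shift, SpKd.shape, shape_shift j, shape_shift k]

theorem shape_hsubst : ∀ (K : SpKd) x k v, (K.hsubst x k v).shape = K.shape
  | .intv _ _, _, _, _ => by simp [SpKd.hsubst, SpKd.shape]
  | .pi j K', x, k, v => by simp [SpKd.hsubst, SpKd.shape, shape_hsubst j, shape_hsubst K']

theorem shape_weaken (n : ℕ) (K : SpKd) : (K.weaken n).shape = K.shape := by
  induction n with
  | zero => rfl
  | succ n ih => rw [SpKd.weaken, Function.iterate_succ_apply', shape_shift]; exact ih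

end SpKd

namespace SpSpine

theorem append_nil : ∀ (s : SpSpine), s.append .nil = s
  | .nil => rfl
  | .cons a s => by simp [SpSpine.append, append_nil s]

theorem append_assoc : ∀ (s t r : SpSpine), (s.append t).append r = s.append (t.append r)
  | .nil, _, _ => rfl
  | .cons a s, t, r => by simp [SpSpine.append, append_assoc s]

theorem shift_append : ∀ (s t : SpSpine) c,
    (s.append t).shift c = (s.shift c).append (t.shift c)
  | .nil, _, _ => rfl
  | .cons a s, t, c => by simp [SpSpine.append, SpSpine.shift, shift_append s]

theorem hsubst_append : ∀ (s t : SpSpine) x k v,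
    (s.append t).hsubst x k v = (s.hsubst x k v).append (t.hsubst x k v)
  | .nil, _, _, _, _ => by simp [SpSpine.append, SpSpine.hsubst]
  | .cons a s, t, x, k, v => by simp [SpSpine.append, SpSpine.hsubst, hsubst_append s]

end SpSpine

mutual
theorem SpTy.hsubst_shift : ∀ (a : SpTy) c k v, (a.shift c).hsubst c k v = a
  | .elim (.var y) s, c, k, v => by
      rcases Nat.lt_or_ge y c with h | h
      · simp [SpTy.shift, SpHead.shift, h, SpTy.hsubst, show ¬ y = c by omega,
          show ¬ c < y by omega, SpSpine.hsubst_shift s c k v]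
      · simp [SpTy.shift, SpHead.shift, show ¬ y < c by omega, SpTy.hsubst,
          show ¬ y + 1 = c by omega, show c < y + 1 by omega, SpSpine.hsubst_shift s c k v]
  | .elim .top s, c, k, v => by
      simp [SpTy.shift, SpHead.shift, SpTy.hsubst, SpSpine.hsubst_shift s c k v]
  | .elim .bot s, c, k, v => by
      simp [SpTy.shift, SpHead.shift, SpTy.hsubst, SpSpine.hsubst_shift s c k v]
  | .elim (.arr a b) s, c, k, v => by
      simp [SpTy.shift, SpHead.shift, SpTy.hsubst, SpSpine.hsubst_shift s c k v,
        SpTy.hsubst_shift a c k v, SpTy.hsubst_shift b c k v]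
  | .elim (.all j a) s, c, k, v => by
      simp [SpTy.shift, SpHead.shift, SpTy.hsubst, SpSpine.hsubst_shift s c k v,
        SpKd.hsubst_shift j c k v, SpTy.hsubst_shift a (c + 1) k (v.shift 0)]
  | .elim (.lam j a) s, c, k, v => by
      simp [SpTy.shift, SpHead.shift, SpTy.hsubst, SpSpine.hsubst_shift s c k v,
        SpKd.hsubst_shift j c k v, SpTy.hsubst_shift a (c + 1) k (v.shift 0)]

theorem SpSpine.hsubst_shift : ∀ (s : SpSpine) c k v, (s.shift c).hsubst c k v = s
  | .nil, _, _, _ => by simp [SpSpine.shift, SpSpine.hsubst]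
  | .cons a s, c, k, v => by
      simp [SpSpine.shift, SpSpine.hsubst, SpTy.hsubst_shift a c k v,
        SpSpine.hsubst_shift s c k v]

theorem SpKd.hsubst_shift : ∀ (K : SpKd) c k v, (K.shift c).hsubst c k v = K
  | .intv a b, c, k, v => by
      simp [SpKd.shift, SpKd.hsubst, SpTy.hsubst_shift a c k v, SpTy.hsubst_shift b c k v]
  | .pi j K', c, k, v => by
      simp [SpKd.shift, SpKd.hsubst, SpKd.hsubst_shift j c k v,
        SpKd.hsubst_shift K' (c + 1) k (v.shift 0)]
end

mutual
theorem SpTy.shift_shift_of_le : ∀ (a : SpTy) c d, c ≤ d →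
    (a.shift d).shift c = (a.shift c).shift (d + 1)
  | .elim h s, c, d, hcd => by
      simp [SpTy.shift, SpHead.shift_shift_of_le h c d hcd, SpSpine.shift_shift_of_le s c d hcd]

theorem SpHead.shift_shift_of_le : ∀ (h : SpHead) c d, c ≤ d →
    (h.shift d).shift c = (h.shift c).shift (d + 1)
  | .var y, c, d, hcd => by
      simp only [SpHead.shift_var]
      split_ifs <;> first | rfl | omega
  | .top, _, _, _ => rfl
  | .bot, _, _, _ => rfl
  | .arr a b, c, d, hcd => by
      simp [SpHead.shift, SpTy.shift_shift_of_le a c d hcd, SpTy.shift_shift_of_le b c d hcd]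
  | .all k a, c, d, hcd => by
      simp [SpHead.shift, SpKd.shift_shift_of_le k c d hcd,
        SpTy.shift_shift_of_le a (c + 1) (d + 1) (by omega)]
  | .lam k a, c, d, hcd => by
      simp [SpHead.shift, SpKd.shift_shift_of_le k c d hcd,
        SpTy.shift_shift_of_le a (c + 1) (d + 1) (by omega)]

theorem SpSpine.shift_shift_of_le : ∀ (s : SpSpine) c d, c ≤ d →
    (s.shift d).shift c = (s.shift c).shift (d + 1)
  | .nil, _, _, _ => rfl
  | .cons a s, c, d, hcd => by
      simp [SpSpine.shift, SpTy.shift_shift_of_le a c d hcd, SpSpine.shift_shift_of_le s c d hcd]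

theorem SpKd.shift_shift_of_le : ∀ (K : SpKd) c d, c ≤ d →
    (K.shift d).shift c = (K.shift c).shift (d + 1)
  | .intv a b, c, d, hcd => by
      simp [SpKd.shift, SpTy.shift_shift_of_le a c d hcd, SpTy.shift_shift_of_le b c d hcd]
  | .pi j k, c, d, hcd => by
      simp [SpKd.shift, SpKd.shift_shift_of_le j c d hcd,
        SpKd.shift_shift_of_le k (c + 1) (d + 1) (by omega)]
end

mutual
theorem WEqTy.refl : ∀ (a : SpTy), WEqTy a a
  | .elim h s => .elim (WEqHead.refl h) (WEqSp.refl s)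

theorem WEqHead.refl : ∀ (h : SpHead), WEqHead h h
  | .var _ => .var
  | .top => .top
  | .bot => .bot
  | .arr a b => .arr (WEqTy.refl a) (WEqTy.refl b)
  | .all k a => .all (WEqKd.refl k) (WEqTy.refl a)
  | .lam _ a => .lam rfl (WEqTy.refl a)

theorem WEqSp.refl : ∀ (s : SpSpine), WEqSp s s
  | .nil => .nil
  | .cons a s => .cons (WEqTy.refl a) (WEqSp.refl s)

theorem WEqKd.refl : ∀ (k : SpKd), WEqKd k k
  | .intv a b => .intv (WEqTy.refl a) (WEqTy.refl b)
  | .pi j k => .pi (WEqKd.refl j) (WEqKd.refl k)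
end

mutual
theorem WEqTy.trans : ∀ {a b c : SpTy}, WEqTy a b → WEqTy b c → WEqTy a c
  | _, _, _, .elim hh hs, .elim hh' hs' => .elim (hh.trans hh') (hs.trans hs')

theorem WEqHead.trans : ∀ {h₁ h₂ h₃ : SpHead}, WEqHead h₁ h₂ → WEqHead h₂ h₃ → WEqHead h₁ h₃
  | _, _, _, .var, .var => .var
  | _, _, _, .top, .top => .top
  | _, _, _, .bot, .bot => .bot
  | _, _, _, .arr ha hb, .arr ha' hb' => .arr (ha.trans ha') (hb.trans hb')
  | _, _, _, .all hk ha, .all hk' ha' => .all (hk.trans hk') (ha.trans ha')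
  | _, _, _, .lam hk ha, .lam hk' ha' => .lam (hk.trans hk') (ha.trans ha')

theorem WEqSp.trans : ∀ {s₁ s₂ s₃ : SpSpine}, WEqSp s₁ s₂ → WEqSp s₂ s₃ → WEqSp s₁ s₃
  | _, _, _, .nil, .nil => .nil
  | _, _, _, .cons ha hs, .cons ha' hs' => .cons (ha.trans ha') (hs.trans hs')

theorem WEqKd.trans : ∀ {k₁ k₂ k₃ : SpKd}, WEqKd k₁ k₂ → WEqKd k₂ k₃ → WEqKd k₁ k₃
  | _, _, _, .intv ha hb, .intv ha' hb' => .intv (ha.trans ha') (hb.trans hb')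
  | _, _, _, .pi hj hk, .pi hj' hk' => .pi (hj.trans hj') (hk.trans hk')
end

mutual
theorem WEqTy.shift : ∀ {a b : SpTy} (c : ℕ), WEqTy a b → WEqTy (a.shift c) (b.shift c)
  | _, _, c, .elim hh hs => .elim (hh.shift c) (hs.shift c)

theorem WEqHead.shift : ∀ {h h' : SpHead} (c : ℕ), WEqHead h h' →
    WEqHead (h.shift c) (h'.shift c)
  | _, _, c, .var => by simp only [SpHead.shift_var]; exact .var
  | _, _, _, .top => .top
  | _, _, _, .bot => .bot
  | _, _, c, .arr ha hb => .arr (ha.shift c) (hb.shift c)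
  | _, _, c, .all hk ha => .all (hk.shift c) (ha.shift (c + 1))
  | _, _, c, .lam hk ha =>
      .lam (by simp only [SpKd.shape_shift, hk]) (ha.shift (c + 1))

theorem WEqSp.shift : ∀ {s s' : SpSpine} (c : ℕ), WEqSp s s' → WEqSp (s.shift c) (s'.shift c)
  | _, _, _, .nil => .nil
  | _, _, c, .cons ha hs => .cons (ha.shift c) (hs.shift c)

theorem WEqKd.shift : ∀ {k k' : SpKd} (c : ℕ), WEqKd k k' → WEqKd (k.shift c) (k'.shift c)
  | _, _, c, .intv ha hb => .intv (ha.shift c) (hb.shift c)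
  | _, _, c, .pi hj hk => .pi (hj.shift c) (hk.shift (c + 1))
end

theorem WEqSp.append : ∀ {s s' t t' : SpSpine}, WEqSp s s' → WEqSp t t' →
    WEqSp (s.append t) (s'.append t')
  | _, _, _, _, .nil, ht => ht
  | _, _, _, _, .cons ha hs, ht => .cons ha (hs.append ht)

theorem WEqTy.appSp : ∀ {d d' : SpTy} {t t' : SpSpine}, WEqTy d d' → WEqSp t t' →
    WEqTy (d.appSp t) (d'.appSp t')
  | _, _, _, _, .elim hh hs, ht => .elim hh (hs.append ht)

theorem WEqTy.app1 {d d' v v' : SpTy} (h : WEqTy d d') (hv : WEqTy v v') :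
    WEqTy (d.app1 v) (d'.app1 v') :=
  h.appSp (.cons hv .nil)

theorem SpTy.shift_appSp : ∀ (d : SpTy) (s : SpSpine) (c : ℕ),
    (d.appSp s).shift c = (d.shift c).appSp (s.shift c)
  | .elim h t, s, c => by simp [SpTy.appSp, SpTy.shift, SpSpine.shift_append]

theorem SpTy.shift_app1 (d v : SpTy) (c : ℕ) :
    (d.app1 v).shift c = (d.shift c).app1 (v.shift c) := by
  simp [SpTy.app1, SpTy.shift_appSp, SpSpine.shift]

mutual
theorem SpTy.shift_rapp : ∀ (d : SpTy) (k : SKind) (v : SpTy) (c : ℕ),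
    (d.rapp k v).shift c = (d.shift c).rapp k (v.shift c)
  | d, .star, v, c => by
      cases d; simp [SpTy.rapp, SpTy.shift_app1, SpTy.shift]
  | .elim (.lam j d') .nil, .arr k1 k2, v, c => by
      simp only [SpTy.rapp, SpTy.shift, SpHead.shift, SpSpine.shift]
      exact (SpTy.hsubst_shift_succ d' 0 c k1 v (Nat.zero_le c)).symm
  | .elim (.var y) s, .arr k1 k2, v, c => by
      simp [SpTy.rapp, SpTy.shift_app1, SpTy.shift, SpHead.shift_var]
  | .elim .top s, .arr k1 k2, v, c => by
      simp [SpTy.rapp, SpTy.shift_app1, SpTy.shift, SpHead.shift]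
  | .elim .bot s, .arr k1 k2, v, c => by
      simp [SpTy.rapp, SpTy.shift_app1, SpTy.shift, SpHead.shift]
  | .elim (.arr a b) s, .arr k1 k2, v, c => by
      simp [SpTy.rapp, SpTy.shift_app1, SpTy.shift, SpHead.shift]
  | .elim (.all j a) s, .arr k1 k2, v, c => by
      simp [SpTy.rapp, SpTy.shift_app1, SpTy.shift, SpHead.shift]
  | .elim (.lam j a) (.cons b s), .arr k1 k2, v, c => by
      simp [SpTy.rapp, SpTy.shift_app1, SpTy.shift, SpHead.shift, SpSpine.shift]
termination_by d k v c => (sizeOf k, 0, 0)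

theorem SpTy.shift_rappSp : ∀ (d : SpTy) (k : SKind) (s : SpSpine) (c : ℕ),
    (d.rappSp k s).shift c = (d.shift c).rappSp k (s.shift c)
  | d, k, .nil, c => by simp [SpTy.rappSp, SpSpine.shift]
  | d, .arr k1 k2, .cons e es, c => by
      simp only [SpTy.rappSp, SpSpine.shift]
      rw [SpTy.shift_rappSp _ k2 es c, SpTy.shift_rapp d (.arr k1 k2) e c]
  | d, .star, .cons e es, c => by
      simp [SpTy.rappSp, SpSpine.shift, SpTy.shift_appSp]
termination_by d k s c => (sizeOf k, 0, sizeOf s + 1)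

theorem SpTy.hsubst_shift_succ : ∀ (a : SpTy) (x c : ℕ) (k : SKind) (v : SpTy), x ≤ c →
    (a.shift (c + 1)).hsubst x k (v.shift c) = (a.hsubst x k v).shift c
  | .elim (.var y) s, x, c, k, v, hxc => by
      rcases eq_or_ne y x with rfl | hne
      · simp only [SpTy.shift, SpHead.shift_var, if_pos (show y < c + 1 by omega),
          SpTy.hsubst, ite_true, SpSpine.hsubst_shift_succ s y c k v hxc]
        exact (SpTy.shift_rappSp v k (s.hsubst y k v) c).symm
      · have hy : (if y < c + 1 then y else y + 1) ≠ x := by split_ifs <;> omega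
        simp only [SpTy.shift, SpHead.shift_var, SpTy.hsubst, if_neg hy, if_neg hne,
          SpSpine.hsubst_shift_succ s x c k v hxc]
        congr 2
        split_ifs <;> omega
  | .elim .top s, x, c, k, v, hxc => by
      simp [SpTy.shift, SpHead.shift, SpTy.hsubst, SpSpine.hsubst_shift_succ s x c k v hxc]
  | .elim .bot s, x, c, k, v, hxc => by
      simp [SpTy.shift, SpHead.shift, SpTy.hsubst, SpSpine.hsubst_shift_succ s x c k v hxc]
  | .elim (.arr a b) s, x, c, k, v, hxc => by
      simp [SpTy.shift, SpHead.shift, SpTy.hsubst, SpSpine.hsubst_shift_succ s x c k v hxc,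
        SpTy.hsubst_shift_succ a x c k v hxc, SpTy.hsubst_shift_succ b x c k v hxc]
  | .elim (.all j a) s, x, c, k, v, hxc => by
      simp only [SpTy.shift, SpHead.shift, SpTy.hsubst, SpSpine.hsubst_shift_succ s x c k v hxc,
        SpKd.hsubst_shift_succ j x c k v hxc]
      rw [SpTy.shift_shift_of_le v 0 c (Nat.zero_le c),
        SpTy.hsubst_shift_succ a (x + 1) (c + 1) k (v.shift 0) (by omega)]
  | .elim (.lam j a) s, x, c, k, v, hxc => by
      simp only [SpTy.shift, SpHead.shift, SpTy.hsubst, SpSpine.hsubst_shift_succ s x c k v hxc,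
        SpKd.hsubst_shift_succ j x c k v hxc]
      rw [SpTy.shift_shift_of_le v 0 c (Nat.zero_le c),
        SpTy.hsubst_shift_succ a (x + 1) (c + 1) k (v.shift 0) (by omega)]
termination_by a x c k v _ => (sizeOf k, 1, sizeOf a)

theorem SpSpine.hsubst_shift_succ : ∀ (s : SpSpine) (x c : ℕ) (k : SKind) (v : SpTy), x ≤ c →
    (s.shift (c + 1)).hsubst x k (v.shift c) = (s.hsubst x k v).shift c
  | .nil, _, _, _, _, _ => by simp [SpSpine.shift, SpSpine.hsubst]
  | .cons a s, x, c, k, v, hxc => by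
      simp [SpSpine.shift, SpSpine.hsubst, SpTy.hsubst_shift_succ a x c k v hxc,
        SpSpine.hsubst_shift_succ s x c k v hxc]
termination_by s x c k v _ => (sizeOf k, 1, sizeOf s)

theorem SpKd.hsubst_shift_succ : ∀ (K : SpKd) (x c : ℕ) (k : SKind) (v : SpTy), x ≤ c →
    (K.shift (c + 1)).hsubst x k (v.shift c) = (K.hsubst x k v).shift c
  | .intv a b, x, c, k, v, hxc => by
      simp [SpKd.shift, SpKd.hsubst, SpTy.hsubst_shift_succ a x c k v hxc,
        SpTy.hsubst_shift_succ b x c k v hxc]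
  | .pi j K', x, c, k, v, hxc => by
      simp only [SpKd.shift, SpKd.hsubst, SpKd.hsubst_shift_succ j x c k v hxc]
      rw [SpTy.shift_shift_of_le v 0 c (Nat.zero_le c),
        SpKd.hsubst_shift_succ K' (x + 1) (c + 1) k (v.shift 0) (by omega)]
termination_by K x c k v _ => (sizeOf k, 1, sizeOf K)
end

mutual
theorem SpTy.hsubst_succ_shift : ∀ (a : SpTy) (x c : ℕ) (k : SKind) (v : SpTy), c ≤ x →
    (a.shift c).hsubst (x + 1) k (v.shift c) = (a.hsubst x k v).shift c
  | .elim (.var y) s, x, c, k, v, hcx => by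
      rcases eq_or_ne y x with rfl | hne
      · simp only [SpTy.shift, SpHead.shift_var, if_neg (show ¬ y < c by omega),
          SpTy.hsubst, ite_true, SpSpine.hsubst_succ_shift s y c k v hcx]
        exact (SpTy.shift_rappSp v k (s.hsubst y k v) c).symm
      · have hy : (if y < c then y else y + 1) ≠ x + 1 := by split_ifs <;> omega
        simp only [SpTy.shift, SpHead.shift_var, SpTy.hsubst, if_neg hy, if_neg hne,
          SpSpine.hsubst_succ_shift s x c k v hcx]
        congr 2
        split_ifs <;> omega
  | .elim .top s, x, c, k, v, hcx => by
      simp [SpTy.shift, SpHead.shift, SpTy.hsubst, SpSpine.hsubst_succ_shift s x c k v hcx]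
  | .elim .bot s, x, c, k, v, hcx => by
      simp [SpTy.shift, SpHead.shift, SpTy.hsubst, SpSpine.hsubst_succ_shift s x c k v hcx]
  | .elim (.arr a b) s, x, c, k, v, hcx => by
      simp [SpTy.shift, SpHead.shift, SpTy.hsubst, SpSpine.hsubst_succ_shift s x c k v hcx,
        SpTy.hsubst_succ_shift a x c k v hcx, SpTy.hsubst_succ_shift b x c k v hcx]
  | .elim (.all j a) s, x, c, k, v, hcx => by
      simp only [SpTy.shift, SpHead.shift, SpTy.hsubst, SpSpine.hsubst_succ_shift s x c k v hcx,
        SpKd.hsubst_succ_shift j x c k v hcx]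
      rw [SpTy.shift_shift_of_le v 0 c (Nat.zero_le c),
        SpTy.hsubst_succ_shift a (x + 1) (c + 1) k (v.shift 0) (by omega)]
  | .elim (.lam j a) s, x, c, k, v, hcx => by
      simp only [SpTy.shift, SpHead.shift, SpTy.hsubst, SpSpine.hsubst_succ_shift s x c k v hcx,
        SpKd.hsubst_succ_shift j x c k v hcx]
      rw [SpTy.shift_shift_of_le v 0 c (Nat.zero_le c),
        SpTy.hsubst_succ_shift a (x + 1) (c + 1) k (v.shift 0) (by omega)]

theorem SpSpine.hsubst_succ_shift : ∀ (s : SpSpine) (x c : ℕ) (k : SKind) (v : SpTy), c ≤ x →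
    (s.shift c).hsubst (x + 1) k (v.shift c) = (s.hsubst x k v).shift c
  | .nil, _, _, _, _, _ => by simp [SpSpine.shift, SpSpine.hsubst]
  | .cons a s, x, c, k, v, hcx => by
      simp [SpSpine.shift, SpSpine.hsubst, SpTy.hsubst_succ_shift a x c k v hcx,
        SpSpine.hsubst_succ_shift s x c k v hcx]

theorem SpKd.hsubst_succ_shift : ∀ (K : SpKd) (x c : ℕ) (k : SKind) (v : SpTy), c ≤ x →
    (K.shift c).hsubst (x + 1) k (v.shift c) = (K.hsubst x k v).shift c
  | .intv a b, x, c, k, v, hcx => by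
      simp [SpKd.shift, SpKd.hsubst, SpTy.hsubst_succ_shift a x c k v hcx,
        SpTy.hsubst_succ_shift b x c k v hcx]
  | .pi j K', x, c, k, v, hcx => by
      simp only [SpKd.shift, SpKd.hsubst, SpKd.hsubst_succ_shift j x c k v hcx]
      rw [SpTy.shift_shift_of_le v 0 c (Nat.zero_le c),
        SpKd.hsubst_succ_shift K' (x + 1) (c + 1) k (v.shift 0) (by omega)]
end

mutual
theorem WEqTy.rapp : ∀ (k : SKind) {d d' v v' : SpTy}, WEqTy d d' → WEqTy v v' →
    WEqTy (d.rapp k v) (d'.rapp k v')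
  | .star, .elim _ _, .elim _ _, _, _, hd, hv => by
      simp only [SpTy.rapp]
      exact hd.app1 hv
  | .arr k1 _, _, _, _, _, .elim hh hs, hv => by
      have happ := WEqTy.app1 (.elim hh hs) hv
      cases hh with
      | lam _ ha =>
          cases hs with
          | nil => simp only [SpTy.rapp]; exact ha.hsubst 0 k1 hv
          | cons => simp only [SpTy.rapp]; exact happ
      | _ => cases hs <;> simp only [SpTy.rapp] <;> exact happ
termination_by k => (sizeOf k, 0, 0)

theorem WEqTy.rappSp : ∀ (k : SKind) {d d' : SpTy} {s s' : SpSpine}, WEqTy d d' → WEqSp s s' →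
    WEqTy (d.rappSp k s) (d'.rappSp k s')
  | _, _, _, _, _, hd, .nil => by simp only [SpTy.rappSp]; exact hd
  | .star, _, _, _, _, hd, .cons ha hs => by
      simp only [SpTy.rappSp]
      exact hd.appSp (.cons ha hs)
  | .arr k1 k2, _, _, _, _, hd, .cons ha hs => by
      simp only [SpTy.rappSp]
      exact (hd.rapp (.arr k1 k2) ha).rappSp k2 hs
termination_by k _ _ s => (sizeOf k, 0, sizeOf s + 1)

theorem WEqTy.hsubst : ∀ {a a' : SpTy} (x : ℕ) (k : SKind) {v v' : SpTy},
    WEqTy a a' → WEqTy v v' → WEqTy (a.hsubst x k v) (a'.hsubst x k v')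
  | _, _, x, k, _, _, .elim hh hs, hv => by
      cases hh with
      | @var y =>
          by_cases hyx : y = x
          · subst hyx
            simp only [SpTy.hsubst]
            exact hv.rappSp k (hs.hsubst y k hv)
          · simp only [SpTy.hsubst, if_neg hyx]
            exact .elim .var (hs.hsubst x k hv)
      | top => simp only [SpTy.hsubst]; exact .elim .top (hs.hsubst x k hv)
      | bot => simp only [SpTy.hsubst]; exact .elim .bot (hs.hsubst x k hv)
      | arr ha hb =>
          simp only [SpTy.hsubst]
          exact .elim (.arr (ha.hsubst x k hv) (hb.hsubst x k hv)) (hs.hsubst x k hv)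
      | all hk ha =>
          simp only [SpTy.hsubst]
          exact .elim (.all (hk.hsubst x k hv) (ha.hsubst (x + 1) k (hv.shift 0)))
            (hs.hsubst x k hv)
      | lam hk ha =>
          simp only [SpTy.hsubst]
          exact .elim (.lam (by simp only [SpKd.shape_hsubst, hk])
            (ha.hsubst (x + 1) k (hv.shift 0))) (hs.hsubst x k hv)
termination_by a _ _ k => (sizeOf k, 1, sizeOf a)

theorem WEqSp.hsubst : ∀ {s s' : SpSpine} (x : ℕ) (k : SKind) {v v' : SpTy},
    WEqSp s s' → WEqTy v v' → WEqSp (s.hsubst x k v) (s'.hsubst x k v')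
  | _, _, _, _, _, _, .nil, _ => by simp only [SpSpine.hsubst]; exact .nil
  | _, _, x, k, _, _, .cons ha hs, hv => by
      simp only [SpSpine.hsubst]
      exact .cons (ha.hsubst x k hv) (hs.hsubst x k hv)
termination_by s _ _ k => (sizeOf k, 1, sizeOf s)

theorem WEqKd.hsubst : ∀ {K K' : SpKd} (x : ℕ) (k : SKind) {v v' : SpTy},
    WEqKd K K' → WEqTy v v' → WEqKd (K.hsubst x k v) (K'.hsubst x k v')
  | _, _, x, k, _, _, .intv ha hb, hv => by
      simp only [SpKd.hsubst]
      exact .intv (ha.hsubst x k hv) (hb.hsubst x k hv)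
  | _, _, x, k, _, _, .pi hj hk, hv => by
      simp only [SpKd.hsubst]
      exact .pi (hj.hsubst x k hv) (hk.hsubst (x + 1) k (hv.shift 0))
termination_by K _ _ k => (sizeOf k, 1, sizeOf K)
end

theorem WEqTy.etaExp : ∀ {J J' : SpKd} {a a' : SpTy}, J.shape = J'.shape → WEqTy a a' →
    WEqTy (etaExp J a) (etaExp J' a')
  | .intv _ _, .intv _ _, _, _, _, ha => ha
  | .pi J₁ K₁, .pi J₂ K₂, _, _, hJ, ha => by
      simp only [SpKd.shape, SKind.arr.injEq] at hJ
      exact .elim (.lam hJ.1 (((ha.shift 0).app1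
        ((WEqTy.refl _).etaExp hJ.1)).etaExp hJ.2)) .nil
  | .intv _ _, .pi _ _, _, _, h, _ | .pi _ _, .intv _ _, _, _, h, _ => by
      simp [SpKd.shape] at h

/-- Only up to `≈`: `etaExp` reuses the domain `J` under the binder it introduces, unshifted. -/
theorem weq_shift_etaExp : ∀ (K : SpKd) (a : SpTy) (c : ℕ),
    WEqTy ((etaExp K a).shift c) (etaExp (K.shift c) (a.shift c))
  | .intv _ _, a, _ => WEqTy.refl _
  | .pi J K, a, c => by
      simp only [etaExp, SpKd.shift, SpTy.shift, SpHead.shift, SpSpine.shift]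
      refine .elim (.lam rfl ((weq_shift_etaExp K _ (c + 1)).trans ?_)) .nil
      refine WEqTy.etaExp rfl ?_
      rw [SpTy.shift_app1, ← SpTy.shift_shift_of_le a 0 c (Nat.zero_le c)]
      refine (WEqTy.refl _).app1 ((weq_shift_etaExp J _ (c + 1)).trans ?_)
      refine WEqTy.etaExp (by simp only [SpKd.shape_shift]) ?_
      simp only [SpTy.shift, SpHead.shift_var, if_pos (Nat.zero_lt_succ c), SpSpine.shift]
      exact WEqTy.refl _

theorem weq_hsubst_etaExp_of_ne : ∀ (K : SpKd) (x y : ℕ) (u : SpSpine) (k : SKind) (v : SpTy),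
    y ≠ x → WEqTy ((etaExp K (.elim (.var y) u)).hsubst x k v)
      (etaExp (K.hsubst x k v) (.elim (.var (if x < y then y - 1 else y)) (u.hsubst x k v)))
  | .intv a b, x, y, u, k, v, hne => by
      simp only [etaExp, SpTy.hsubst, if_neg hne, SpKd.hsubst]
      exact WEqTy.refl _
  | .pi J K, x, y, u, k, v, hne => by
      have hy : (if x + 1 < y + 1 then y + 1 - 1 else y + 1)
          = (if x < y then y - 1 else y) + 1 := by split_ifs <;> omega
      simp only [etaExp, SpTy.shift, SpHead.shift_var, if_neg (show ¬ y < 0 by omega),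
        SpTy.app1, SpTy.appSp, SpTy.hsubst, SpKd.hsubst, SpSpine.hsubst]
      refine .elim (.lam rfl ?_) .nil
      refine (weq_hsubst_etaExp_of_ne K (x + 1) (y + 1) _ k (v.shift 0) (by omega)).trans ?_
      rw [hy, SpSpine.hsubst_append, SpSpine.hsubst_succ_shift u x 0 k v (Nat.zero_le x)]
      simp only [SpSpine.hsubst]
      refine WEqTy.etaExp rfl (.elim .var ((WEqSp.refl _).append (.cons ?_ .nil)))
      refine (weq_hsubst_etaExp_of_ne J (x + 1) 0 .nil k (v.shift 0) (by omega)).trans ?_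
      refine WEqTy.etaExp (by simp only [SpKd.shape_hsubst]) (.elim ?_ ?_)
      · simp only [if_neg (show ¬ x + 1 < 0 by omega)]; exact .var
      · simp only [SpSpine.hsubst]; exact .nil

inductive ShapeSp : SKind → SpSpine → SKind → Prop
  | nil : ShapeSp k .nil k
  | cons : ShapeSp k s l → ShapeSp (.arr j k) (.cons a s) l

namespace ShapeSp

theorem shift : ∀ {j l : SKind} {s : SpSpine}, ShapeSp j s l → ∀ c, ShapeSp j (s.shift c) l
  | _, _, _, .nil, _ => .nil
  | _, _, _, .cons h, c => .cons (h.shift c)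

theorem hsubst : ∀ {j l : SKind} {s : SpSpine}, ShapeSp j s l → ∀ x k v,
    ShapeSp j (s.hsubst x k v) l
  | _, _, _, .nil, _, _, _ => by simp only [SpSpine.hsubst]; exact .nil
  | _, _, _, .cons h, x, k, v => by simp only [SpSpine.hsubst]; exact .cons (h.hsubst x k v)

theorem append : ∀ {j l m : SKind} {s t : SpSpine}, ShapeSp j s l → ShapeSp l t m →
    ShapeSp j (s.append t) m
  | _, _, _, _, _, .nil, ht => ht
  | _, _, _, _, _, .cons h, ht => .cons (h.append ht)

end ShapeSp

theorem SpTy.rappSp_append : ∀ {j s l}, ShapeSp j s l → ∀ (d : SpTy) (t : SpSpine),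
    d.rappSp j (s.append t) = (d.rappSp j s).rappSp l t
  | _, _, _, .nil, d, t => by simp [SpSpine.append, SpTy.rappSp]
  | _, _, _, .cons h, d, t => by
      simp only [SpSpine.append, SpTy.rappSp]
      exact SpTy.rappSp_append h _ t

theorem SKTy.exists_eq_lam {Γ : SCtx} {U : SpTy} {j k : SKind} (h : SKTy Γ U (.arr j k)) :
    ∃ J V, U = .elim (.lam J V) .nil ∧ J.shape = j ∧ SKTy (some j :: Γ) V k := by
  generalize hjk : SKind.arr j k = m at h
  cases h with
  | lam _ hV => cases hjk; exact ⟨_, _, rfl, rfl, hV⟩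
  | _ => cases hjk

theorem WEqTy.exists_eq_lam {a V : SpTy} {J : SpKd} (h : WEqTy a (.elim (.lam J V) .nil)) :
    ∃ J' b, a = .elim (.lam J' b) .nil ∧ J'.shape = J.shape ∧ WEqTy b V := by
  cases h with
  | elim hh hs => cases hs; cases hh with
    | lam hJ hb => exact ⟨_, _, rfl, hJ, hb⟩

def RappSpEtaVarWEq (k : SKind) : Prop :=
  ∀ (K : SpKd) (x : ℕ) (Γ : SCtx) (s : SpSpine), K.shape = k → SSp Γ k s .star →
    WEqTy ((etaExp K (.elim (.var x) .nil)).rappSp k s) (.elim (.var x) s)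

theorem weq_shift_etaExp_var (K : SpKd) (n : ℕ) :
    WEqTy ((etaExp K (.elim (.var n) .nil)).shift 0)
      (etaExp (K.shift 0) (.elim (.var (n + 1)) .nil)) :=
  weq_shift_etaExp K _ 0

mutual
theorem SKTy.weq_hsubst_etaExp_var {k : SKind} {γ : SCtx} (hη : RappSpEtaVarWEq k) :
    ∀ {Γ V j}, SKTy Γ V j → ∀ (δ : SCtx) (K : SpKd), Γ = δ ++ some k :: γ → K.shape = k →
      WEqTy ((V.shift (δ.length + 1)).hsubst δ.length k
        (etaExp K (.elim (.var δ.length) .nil))) V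
  | _, _, _, .top, _, _, _, _ => by
      simp only [SpTy.shift, SpHead.shift, SpSpine.shift, SpTy.hsubst, SpSpine.hsubst]
      exact WEqTy.refl _
  | _, _, _, .bot, _, _, _, _ => by
      simp only [SpTy.shift, SpHead.shift, SpSpine.shift, SpTy.hsubst, SpSpine.hsubst]
      exact WEqTy.refl _
  | _, _, _, .arr hU hV, δ, K, hΓ, hK => by
      simp only [SpTy.shift, SpHead.shift, SpSpine.shift, SpTy.hsubst, SpSpine.hsubst]
      exact .elim (.arr (hU.weq_hsubst_etaExp_var hη δ K hΓ hK)
        (hV.weq_hsubst_etaExp_var hη δ K hΓ hK)) .nil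
  | _, _, _, .all hJ hV, δ, K, hΓ, hK => by
      simp only [SpTy.shift, SpHead.shift, SpSpine.shift, SpTy.hsubst, SpSpine.hsubst]
      refine .elim (.all (hJ.weq_hsubst_etaExp_var hη δ K hΓ hK) ?_) .nil
      exact ((WEqTy.refl _).hsubst _ k (weq_shift_etaExp_var K _)).trans
        (hV.weq_hsubst_etaExp_var hη (_ :: δ) (K.shift 0) (congrArg _ hΓ)
          (by rw [SpKd.shape_shift, hK]))
  | _, _, _, .lam _ hV, δ, K, hΓ, hK => by
      simp only [SpTy.shift, SpHead.shift, SpSpine.shift, SpTy.hsubst, SpSpine.hsubst]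
      refine .elim (.lam (by rw [SpKd.shape_hsubst, SpKd.shape_shift]) ?_) .nil
      exact ((WEqTy.refl _).hsubst _ k (weq_shift_etaExp_var K _)).trans
        (hV.weq_hsubst_etaExp_var hη (_ :: δ) (K.shift 0) (congrArg _ hΓ)
          (by rw [SpKd.shape_shift, hK]))
  | _, _, _, .ne (.varApp (x := y) hy hs), δ, K, hΓ, hK => by
      have hs' := hs.weq_hsubst_etaExp_var hη δ K hΓ hK
      subst hΓ
      rcases lt_trichotomy y δ.length with hlt | rfl | hgt
      · simp only [SpTy.shift, SpHead.shift_var, if_pos (show y < δ.length + 1 by omega),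
          SpTy.hsubst, if_neg hlt.ne, if_neg (show ¬ δ.length < y by omega)]
        exact .elim .var hs'
      · rw [List.getElem?_append_right le_rfl, Nat.sub_self] at hy
        cases hy
        simp only [SpTy.shift, SpHead.shift_var, if_pos (Nat.lt_succ_self _), SpTy.hsubst,
          ite_true]
        exact ((WEqTy.refl _).rappSp k hs').trans (hη K _ _ _ hK hs)
      · simp only [SpTy.shift, SpHead.shift_var, if_neg (show ¬ y < δ.length + 1 by omega),
          SpTy.hsubst, if_neg (show ¬ y + 1 = δ.length by omega),
          if_pos (show δ.length < y + 1 by omega), Nat.add_sub_cancel]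
        exact .elim .var hs'

theorem SWfKd.weq_hsubst_etaExp_var {k : SKind} {γ : SCtx} (hη : RappSpEtaVarWEq k) :
    ∀ {Γ J}, SWfKd Γ J → ∀ (δ : SCtx) (K : SpKd), Γ = δ ++ some k :: γ → K.shape = k →
      WEqKd ((J.shift (δ.length + 1)).hsubst δ.length k
        (etaExp K (.elim (.var δ.length) .nil))) J
  | _, _, .intv hU hV, δ, K, hΓ, hK => by
      simp only [SpKd.shift, SpKd.hsubst]
      exact .intv (hU.weq_hsubst_etaExp_var hη δ K hΓ hK) (hV.weq_hsubst_etaExp_var hη δ K hΓ hK)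
  | _, _, .pi hJ hJ', δ, K, hΓ, hK => by
      simp only [SpKd.shift, SpKd.hsubst]
      refine .pi (hJ.weq_hsubst_etaExp_var hη δ K hΓ hK) ?_
      exact ((WEqKd.refl _).hsubst _ k (weq_shift_etaExp_var K _)).trans
        (hJ'.weq_hsubst_etaExp_var hη (_ :: δ) (K.shift 0) (congrArg _ hΓ)
          (by rw [SpKd.shape_shift, hK]))

theorem SSp.weq_hsubst_etaExp_var {k : SKind} {γ : SCtx} (hη : RappSpEtaVarWEq k) :
    ∀ {Γ j s l}, SSp Γ j s l → ∀ (δ : SCtx) (K : SpKd), Γ = δ ++ some k :: γ → K.shape = k →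
      WEqSp ((s.shift (δ.length + 1)).hsubst δ.length k
        (etaExp K (.elim (.var δ.length) .nil))) s
  | _, _, _, _, .nil, _, _, _, _ => by
      simp only [SpSpine.shift, SpSpine.hsubst]
      exact .nil
  | _, _, _, _, .cons hU hs, δ, K, hΓ, hK => by
      simp only [SpSpine.shift, SpSpine.hsubst]
      exact .cons (hU.weq_hsubst_etaExp_var hη δ K hΓ hK) (hs.weq_hsubst_etaExp_var hη δ K hΓ hK)
end

theorem weq_hsubst_etaExp_var_zero (J : SpKd) (x : ℕ) (k : SKind) (v : SpTy) :
    WEqTy ((etaExp J (.elim (.var 0) .nil)).hsubst (x + 1) k v)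
      (etaExp (J.hsubst (x + 1) k v) (.elim (.var 0) .nil)) := by
  refine (weq_hsubst_etaExp_of_ne J (x + 1) 0 .nil k v (by omega)).trans ?_
  simp only [if_neg (show ¬ x + 1 < 0 by omega), SpSpine.hsubst]
  exact WEqTy.refl _

mutual
theorem weq_hsubst_etaExp_self : ∀ (K : SpKd) (x : ℕ) (k : SKind) (e : SpTy) (u : SpSpine)
    (U : SpTy) (Γ : SCtx), ShapeSp k u K.shape → WEqTy (e.rappSp k (u.hsubst x k e)) U →
    SKTy Γ U K.shape → WEqTy ((etaExp K (.elim (.var x) u)).hsubst x k e) U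
  | .intv _ _, _, _, _, _, _, _, _, hU, _ => by
      simp only [etaExp, SpTy.hsubst, ite_true]
      exact hU
  | .pi J K, x, k, e, u, _, Γ, hu, hU, hUty => by
      obtain ⟨J', V, rfl, hJ', hV⟩ := SKTy.exists_eq_lam hUty
      obtain ⟨Je, b, he, -, hb⟩ := WEqTy.exists_eq_lam hU
      simp only [etaExp, SpTy.shift, SpHead.shift_var, if_neg (show ¬ x < 0 by omega),
        SpTy.app1, SpTy.appSp, SpTy.hsubst, SpSpine.hsubst]
      refine .elim (.lam (by rw [SpKd.shape_hsubst, hJ']) ?_) .nil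
      refine weq_hsubst_etaExp_self K (x + 1) k (e.shift 0) _ V (some J.shape :: Γ)
        ((hu.shift 0).append (.cons .nil)) ?_ (hJ' ▸ hV)
      rw [SpSpine.hsubst_append, SpSpine.hsubst_succ_shift u x 0 k e (Nat.zero_le x),
        SpTy.rappSp_append ((hu.hsubst x k e).shift 0), ← SpTy.shift_rappSp, he]
      simp only [SpSpine.hsubst, SpTy.shift, SpHead.shift, SpSpine.shift, SpKd.shape,
        SpTy.rappSp, SpTy.rapp]
      have hη : RappSpEtaVarWEq J.shape := fun K' x' Γ' s hK' hs =>
        weq_rappSp_etaExp_var K' _ hK' x' .nil Γ' s hs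
      -- the remaining β-reduct is `b[0 := η_J(0)]`, i.e. the main claim at the smaller shape `|J|`
      exact ((hb.shift 1).hsubst 0 J.shape (weq_hsubst_etaExp_var_zero J x k _)).trans
        (hV.weq_hsubst_etaExp_var hη [] _ rfl (SpKd.shape_hsubst _ _ _ _))
termination_by K => sizeOf K.shape
decreasing_by
  all_goals
    try rw [hK']
    simp only [SpKd.shape, SKind.arr.sizeOf_spec]
    omega

theorem weq_rappSp_etaExp_var : ∀ (K : SpKd) (k : SKind), K.shape = k →
    ∀ (x : ℕ) (u : SpSpine) (Γ : SCtx) (s : SpSpine), SSp Γ k s .star →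
    WEqTy ((etaExp K (.elim (.var x) u)).rappSp k s) (.elim (.var x) (u.append s))
  | .intv _ _, _, rfl, _, u, _, _, .nil => by
      simp only [etaExp, SpTy.rappSp, SpSpine.append_nil]
      exact WEqTy.refl _
  | .pi J K, _, rfl, x, u, Γ, _, .cons (U := e) (s := t) he ht => by
      have hβ : WEqTy
          ((etaExp K (.elim (.var (x + 1))
            ((u.shift 0).append (.cons (etaExp J (.elim (.var 0) .nil)) .nil)))).hsubst
              0 J.shape e)
          (etaExp (K.hsubst 0 J.shape e) (.elim (.var x)
            (u.append (.cons ((etaExp J (.elim (.var 0) .nil)).hsubst 0 J.shape e) .nil)))) := by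
        refine (weq_hsubst_etaExp_of_ne K 0 (x + 1) _ J.shape e (by omega)).trans ?_
        rw [if_pos (Nat.succ_pos x), Nat.add_sub_cancel, SpSpine.hsubst_append,
          SpSpine.hsubst_shift u 0 J.shape e]
        simp only [SpSpine.hsubst]
        exact WEqTy.refl _
      have hηJ : WEqTy ((etaExp J (.elim (.var 0) .nil)).hsubst 0 J.shape e) e :=
        weq_hsubst_etaExp_self J 0 J.shape e .nil e Γ .nil
          (by simp only [SpSpine.hsubst, SpTy.rappSp]; exact WEqTy.refl e) he
      simp only [etaExp, SpTy.shift, SpHead.shift_var, if_neg (show ¬ x < 0 by omega),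
        SpTy.app1, SpTy.appSp, SpKd.shape, SpTy.rappSp, SpTy.rapp]
      refine (hβ.rappSp _ (WEqSp.refl t)).trans ?_
      refine (weq_rappSp_etaExp_var _ K.shape (SpKd.shape_hsubst _ _ _ _) x _ Γ t ht).trans ?_
      rw [SpSpine.append_assoc]
      exact .elim .var ((WEqSp.refl u).append (.cons hηJ (WEqSp.refl t)))
termination_by K => sizeOf K.shape
decreasing_by
  all_goals
    simp only [SpKd.shape, SpKd.shape_hsubst, SKind.arr.sizeOf_spec]
    omega
end

/-- In de Bruijn form `X` is the index `δ.length`; replacing each occurrence of `X` by `η_K(X)`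
while keeping the context is rendered by first shifting the subject at cutoff `δ.length + 1` and
then hereditarily substituting the η-expansion of the variable `δ.length` (whose kind `K` is
weakened from `γ` to the full context) at that index. -/
theorem hsubst_etaExp_var_vanishes :
    ∀ (γ δ : SCtx) (K : SpKd), SWfKd γ K →
      (∀ (V : SpTy) (j : SKind), SKTy (δ ++ some K.shape :: γ) V j →
        WEqTy ((V.shift (δ.length + 1)).hsubst δ.length K.shape
            (etaExp (K.weaken (δ.length + 1)) (.elim (.var δ.length) .nil))) V) ∧
      (∀ (J : SpKd), SWfKd (δ ++ some K.shape :: γ) J →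
        WEqKd ((J.shift (δ.length + 1)).hsubst δ.length K.shape
            (etaExp (K.weaken (δ.length + 1)) (.elim (.var δ.length) .nil))) J) ∧
      (∀ (s : SpSpine) (j l : SKind), SSp (δ ++ some K.shape :: γ) j s l →
        WEqSp ((s.shift (δ.length + 1)).hsubst δ.length K.shape
            (etaExp (K.weaken (δ.length + 1)) (.elim (.var δ.length) .nil))) s) := by
  intro γ δ K _
  have hη : RappSpEtaVarWEq K.shape := fun K' x Γ s hK' hs =>
    weq_rappSp_etaExp_var K' _ hK' x .nil Γ s hs
  have hK := SpKd.shape_weaken (δ.length + 1) K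
  exact ⟨fun V _ h => h.weq_hsubst_etaExp_var hη δ _ rfl hK,
    fun J h => h.weq_hsubst_etaExp_var hη δ _ rfl hK,
    fun s _ _ h => h.weq_hsubst_etaExp_var hη δ _ rfl hK⟩
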